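/- arXiv:2310.12843 — 2 statements merged into one kernel-verified Lean document; each statement's English description precedes it below -/
import Mathlib

section
/- With W as above, if additionally c/b² > N/(N+2), then the smaller eigenvalue λ₋ = (a + d − √((a−d)² + 4·(32/9)(N−1)b²))/2 of W is nonzero, i.e., det(W) = ad − (32/9)(N−1)b² ≠ 0. -/
/-- Under the non-degeneracy condition `c/b² > N/(N+2)`, the matrix
`W = [[a, (8/3)b], [(4/3)(N−1)b, d]]` has nonzero determinant, i.e. its smaller
eigenvalue is nonzero. -/
theorem det_W_ne_zero (N : ℕ) (hN : 2 ≤ N) (b c : ℝ) (hb : b < 0) (hc : 0 < c)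
    (a d : ℝ)
    (ha : a = (1 / 3) * (32 + 8 * ((N : ℝ) - 2)) * c)
    (hd : d = 2 * (1 - b ^ 2 / (3 * c)))
    (hnd : c / b ^ 2 > (N : ℝ) / ((N : ℝ) + 2)) :
    a * d - (32 / 9) * ((N : ℝ) - 1) * b ^ 2 ≠ 0 := by
  have hbne : b ≠ 0 := ne_of_lt hb
  have hb2 : (0:ℝ) < b ^ 2 := by positivity
  have hN2 : (2:ℝ) ≤ (N:ℝ) := by exact_mod_cast hN
  have hNp : (0:ℝ) < (N:ℝ) + 2 := by linarith
  have key : c * ((N:ℝ) + 2) > (N:ℝ) * b ^ 2 := by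
    have := (div_lt_div_iff₀ hNp hb2).mp hnd
    linarith
  have hdet : a * d - (32 / 9) * ((N : ℝ) - 1) * b ^ 2 > 0 := by
    subst ha hd
    have hc' : c ≠ 0 := ne_of_gt hc
    field_simp
    nlinarith [mul_pos hc hc, mul_pos hc hb2]
  linarith
end

section
/- For any positive constants a, b and any dimension L ≥ 1, sup over k₁ > a and k₂ with k₂ − k₁ > b of e^{k₁²u²/2} ∫_{‖y‖ ≥ k₂ u} e^{−‖y‖²/2} dy tends to 0 as u → ∞. -/
/-! On `‖y‖ ≥ R` one has `‖y‖²/2 ≥ (1/2 - s) R² + s ‖y‖²` for `0 < s ≤ 1/2`, so the Gaussian tail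
is at most `e^{-(1/2 - s) R²} (π/s)^{n/2}`. With `R = k₂u` and `s = b/(4k₂)`, the gap
`k₂² - k₁² ≥ b k₂` leaves the bound `x^{n/2} e^{-x v}` with `x = 4πk₂/b ≥ 1` and `v = b²u²/(16π)`,
and `x^p e^{-x} ≤ ⌈p⌉₊!` for `x ≥ 1` makes this uniformly `O(e^{-v})` in `k₁, k₂`. -/

open MeasureTheory Filter Real

theorem rpow_mul_exp_neg_mul_le (p : ℝ) {x v : ℝ} (hx : 1 ≤ x) (hv : 1 ≤ v) :
    x ^ p * exp (-(x * v)) ≤ (⌈p⌉₊.factorial : ℝ) * exp (1 - v) := by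
  have hpow : x ^ ⌈p⌉₊ ≤ (⌈p⌉₊.factorial : ℝ) * exp x := by
    have := pow_div_factorial_le_exp x (by linarith) ⌈p⌉₊
    rwa [div_le_iff₀ (by positivity), mul_comm] at this
  calc x ^ p * exp (-(x * v))
      ≤ x ^ ⌈p⌉₊ * exp (-(x * v)) := by
        gcongr
        rw [← rpow_natCast]
        exact rpow_le_rpow_of_exponent_le hx (Nat.le_ceil p)
    _ ≤ (⌈p⌉₊.factorial : ℝ) * exp x * exp (-(x * v)) := by gcongr
    _ = (⌈p⌉₊.factorial : ℝ) * exp (-(x * (v - 1))) := by rw [mul_assoc, ← exp_add]; ring_nf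
    _ ≤ (⌈p⌉₊.factorial : ℝ) * exp (1 - v) := by gcongr; nlinarith

section InnerProductSpace

variable {V : Type*} [NormedAddCommGroup V] [InnerProductSpace ℝ V] [FiniteDimensional ℝ V]
  [MeasurableSpace V] [BorelSpace V]

theorem integrable_exp_neg_mul_sq_norm {c : ℝ} (hc : 0 < c) :
    Integrable fun y : V => exp (-c * ‖y‖ ^ 2) :=
  .of_integral_ne_zero <| by
    rw [GaussianFourier.integral_rexp_neg_mul_sq_norm hc]
    positivity

theorem setIntegral_exp_neg_sq_norm_div_two_le {s R : ℝ} (hs : 0 < s) (hs' : s ≤ 1 / 2)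
    (hR : 0 ≤ R) :
    ∫ y in {y : V | R ≤ ‖y‖}, exp (-‖y‖ ^ 2 / 2)
      ≤ exp (-(1 / 2 - s) * R ^ 2) * (π / s) ^ (Module.finrank ℝ V / 2 : ℝ) := by
  have hS : MeasurableSet {y : V | R ≤ ‖y‖} := measurableSet_le measurable_const measurable_norm
  have hpointwise : ∀ y ∈ {y : V | R ≤ ‖y‖},
      exp (-‖y‖ ^ 2 / 2) ≤ exp (-(1 / 2 - s) * R ^ 2) * exp (-s * ‖y‖ ^ 2) := by
    intro y (hy : R ≤ ‖y‖)
    rw [← exp_add, exp_le_exp]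
    have hsq : R ^ 2 ≤ ‖y‖ ^ 2 := pow_le_pow_left₀ hR hy 2
    nlinarith [mul_nonneg (sub_nonneg.2 hs') (sub_nonneg.2 hsq)]
  calc ∫ y in {y : V | R ≤ ‖y‖}, exp (-‖y‖ ^ 2 / 2)
      ≤ ∫ y in {y : V | R ≤ ‖y‖}, exp (-(1 / 2 - s) * R ^ 2) * exp (-s * ‖y‖ ^ 2) :=
        integral_mono_of_nonneg (.of_forall fun _ => (exp_pos _).le)
          ((integrable_exp_neg_mul_sq_norm (V := V) hs).const_mul _).integrableOn
          (ae_restrict_of_forall_mem hS hpointwise)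
    _ = exp (-(1 / 2 - s) * R ^ 2) * ∫ y in {y : V | R ≤ ‖y‖}, exp (-s * ‖y‖ ^ 2) :=
        integral_const_mul _ _
    _ ≤ exp (-(1 / 2 - s) * R ^ 2) * ∫ y : V, exp (-s * ‖y‖ ^ 2) :=
        mul_le_mul_of_nonneg_left (setIntegral_le_integral (integrable_exp_neg_mul_sq_norm hs)
          (.of_forall fun _ => (exp_pos _).le)) (exp_pos _).le
    _ = exp (-(1 / 2 - s) * R ^ 2) * (π / s) ^ (Module.finrank ℝ V / 2 : ℝ) := by
        rw [GaussianFourier.integral_rexp_neg_mul_sq_norm hs]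

theorem exp_mul_setIntegral_exp_neg_sq_norm_div_two_le {b k₁ k₂ u : ℝ} (hb : 0 < b)
    (hk₁ : 0 ≤ k₁) (hk : k₁ + b ≤ k₂) (hu : 0 ≤ u) (hv : 1 ≤ b ^ 2 * u ^ 2 / (16 * π)) :
    exp (k₁ ^ 2 * u ^ 2 / 2) * ∫ y in {y : V | k₂ * u ≤ ‖y‖}, exp (-‖y‖ ^ 2 / 2)
      ≤ (⌈(Module.finrank ℝ V : ℝ) / 2⌉₊.factorial : ℝ) * exp (1 - b ^ 2 * u ^ 2 / (16 * π)) := by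
  have hk₂ : 0 < k₂ := by linarith
  set s := b / (4 * k₂) with hs_def
  have hs : 0 < s := by positivity
  have hs' : s ≤ 1 / 2 := by rw [hs_def, div_le_iff₀ (by positivity)]; linarith
  have hx : 1 ≤ π / s := by
    rw [hs_def, div_div_eq_mul_div, le_div_iff₀ hb]
    nlinarith [pi_gt_three]
  have hexponent : k₁ ^ 2 * u ^ 2 / 2 + -(1 / 2 - s) * (k₂ * u) ^ 2
      ≤ -(π / s * (b ^ 2 * u ^ 2 / (16 * π))) := by
    have hsk : -(1 / 2 - s) * (k₂ * u) ^ 2 = -(k₂ ^ 2 * u ^ 2 / 2) + b * k₂ * u ^ 2 / 4 := by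
      rw [hs_def]; field_simp; ring
    have hxv : π / s * (b ^ 2 * u ^ 2 / (16 * π)) = b * k₂ * u ^ 2 / 4 := by
      rw [hs_def]; field_simp; ring
    have hgap : 0 ≤ (k₂ * (k₂ - k₁ - b) + k₁ * (k₂ - k₁)) * u ^ 2 := by
      have := hk₂.le
      have : 0 ≤ k₂ - k₁ - b := by linarith
      have : 0 ≤ k₂ - k₁ := by linarith
      positivity
    rw [hsk, hxv]
    nlinarith
  calc exp (k₁ ^ 2 * u ^ 2 / 2) * ∫ y in {y : V | k₂ * u ≤ ‖y‖}, exp (-‖y‖ ^ 2 / 2)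
      ≤ exp (k₁ ^ 2 * u ^ 2 / 2) *
          (exp (-(1 / 2 - s) * (k₂ * u) ^ 2) * (π / s) ^ (Module.finrank ℝ V / 2 : ℝ)) := by
        gcongr
        exact setIntegral_exp_neg_sq_norm_div_two_le hs hs' (by positivity)
    _ ≤ (π / s) ^ (Module.finrank ℝ V / 2 : ℝ) * exp (-(π / s * (b ^ 2 * u ^ 2 / (16 * π)))) := by
        rw [← mul_assoc, ← exp_add, mul_comm]
        gcongr
    _ ≤ (⌈(Module.finrank ℝ V : ℝ) / 2⌉₊.factorial : ℝ) * exp (1 - b ^ 2 * u ^ 2 / (16 * π)) :=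
        rpow_mul_exp_neg_mul_le _ hx hv

end InnerProductSpace

theorem sup_exp_gaussian_tail_tendsto_zero_general (L : ℕ)
    (a b : ℝ) (ha : 0 < a) (hb : 0 < b) :
    ∀ ε > 0, ∃ U : ℝ, ∀ u : ℝ, U ≤ u → ∀ k₁ k₂ : ℝ, a < k₁ → b < k₂ - k₁ →
      Real.exp (k₁ ^ 2 * u ^ 2 / 2) *
          ∫ y in {y : EuclideanSpace ℝ (Fin L) | k₂ * u ≤ ‖y‖},
            Real.exp (-‖y‖ ^ 2 / 2) < ε := by
  intro ε hε
  set C := (⌈(Module.finrank ℝ (EuclideanSpace ℝ (Fin L)) : ℝ) / 2⌉₊.factorial : ℝ)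
  have hv : Tendsto (fun u : ℝ => b ^ 2 * u ^ 2 / (16 * π)) atTop atTop :=
    ((tendsto_pow_atTop two_ne_zero).const_mul_atTop (by positivity)).atTop_div_const
      (by positivity)
  have hbound : Tendsto (fun u : ℝ => C * exp (1 - b ^ 2 * u ^ 2 / (16 * π))) atTop (nhds 0) := by
    simpa [sub_eq_add_neg] using (tendsto_exp_atBot.comp
      (tendsto_atBot_add_const_left _ 1 (tendsto_neg_atTop_atBot.comp hv))).const_mul C
  obtain ⟨U, hU⟩ := eventually_atTop.1 ((hbound.eventually_lt_const hε).and
    ((hv.eventually_ge_atTop 1).and (eventually_ge_atTop 0)))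
  refine ⟨U, fun u hu k₁ k₂ hk₁ hk₂ => ?_⟩
  obtain ⟨hlt, hv1, hu0⟩ := hU u hu
  exact (exp_mul_setIntegral_exp_neg_sq_norm_div_two_le hb (ha.trans hk₁).le (by linarith) hu0
    hv1).trans_lt hlt

/-- For any `a, b > 0`, the supremum over `k₁ > a` and `k₂ − k₁ > b` of
`e^{k₁²u²/2} ∫_{‖y‖ ≥ k₂u} e^{−‖y‖²/2} dy` tends to `0` as `u → ∞`. -/
theorem sup_exp_gaussian_tail_tendsto_zero (L : ℕ) (hL : 1 ≤ L)
    (a b : ℝ) (ha : 0 < a) (hb : 0 < b) :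
    ∀ ε > 0, ∃ U : ℝ, ∀ u : ℝ, U ≤ u → ∀ k₁ k₂ : ℝ, a < k₁ → b < k₂ - k₁ →
      Real.exp (k₁ ^ 2 * u ^ 2 / 2) *
          ∫ y in {y : EuclideanSpace ℝ (Fin L) | k₂ * u ≤ ‖y‖},
            Real.exp (-‖y‖ ^ 2 / 2) < ε :=
  sup_exp_gaussian_tail_tendsto_zero_general L a b ha hb
end
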